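/- Let s be a positive integer. The alternating word (-+)^s- (of length 2s+1) satisfies (-+)^s- ≥ W for every word W over {+,-,*} of length at most s+1, except W = (+)^{s+1}. -/

import Mathlib

inductive Symb : Type
  | plus | minus | star
deriving DecidableEq


/-- the dual of a symbol: `+` ↦ `-`, `-` ↦ `+`, `*` ↦ `*` -/
def dualSym : Symb → Symb
  | Symb.plus => Symb.minus
  | Symb.minus => Symb.plus
  | Symb.star => Symb.star

/-- the dual (involution) of a word: reverse and dualize each symbol -/
def dualWord (W : List Symb) : List Symb := (W.map dualSym).reverse

/-- the arc relation of the reflexive path `P(W)` on vertices `{0,…,|W|}` -/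
def pathArc (W : List Symb) (i j : ℕ) : Prop :=
  i ≤ W.length ∧ j ≤ W.length ∧
    (i = j ∨ (j = i + 1 ∧ (W[i]? = some Symb.plus ∨ W[i]? = some Symb.star))
           ∨ (i = j + 1 ∧ (W[j]? = some Symb.minus ∨ W[j]? = some Symb.star)))

/-- `f` is an end-point preserving homomorphism from the path `P(V)` onto the path `P(U)` -/
def EPHom (V U : List Symb) (f : ℕ → ℕ) : Prop :=
  f 0 = 0 ∧ f V.length = U.length ∧
  (∀ i j, pathArc V i j → pathArc U (f i) (f j)) ∧
  (∀ m, m ≤ U.length → ∃ i, i ≤ V.length ∧ f i = m)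

/-- the order on words: `U ≤ V` iff there is an end-point preserving
homomorphism from `P(V)` onto `P(U)` -/
def wle (U V : List Symb) : Prop := ∃ f, EPHom V U f

/-!
Homomorphisms out of `P(V)` and `P(V')` glue at the shared end-point to one out of `P(V ++ V')`,
so `≤` is compatible with concatenation. A block `-+` maps onto every one-letter word and onto
`x+` for `x ≠ +`, the letter `-` maps onto every one-letter word other than `+`, and the empty
word lies below everything. Peeling the first block `-+` off `(-+)^(s+1)-` against the first
letter `x` of `W`, or against `x+` when the rest of `W` is `(+)^(s+1)` (and then `x ≠ +`),
reduces the claim to the case `s`.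
-/

lemma pathArc_le_succ {W : List Symb} {i j : ℕ} (h : pathArc W i j) :
    i ≤ j + 1 ∧ j ≤ i + 1 := by
  obtain ⟨-, -, h | h | h⟩ := h <;> omega

lemma pathArc_append_left_iff {V V' : List Symb} {i j : ℕ} (hi : i ≤ V.length)
    (hj : j ≤ V.length) : pathArc (V ++ V') i j ↔ pathArc V i j := by
  have hi' : i ≤ (V ++ V').length := by rw [List.length_append]; omega
  have hj' : j ≤ (V ++ V').length := by rw [List.length_append]; omega
  constructor
  · rintro ⟨-, -, h | ⟨rfl, h⟩ | ⟨rfl, h⟩⟩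
    · exact ⟨hi, hj, Or.inl h⟩
    · rw [List.getElem?_append_left (by omega)] at h
      exact ⟨hi, hj, Or.inr (Or.inl ⟨rfl, h⟩)⟩
    · rw [List.getElem?_append_left (by omega)] at h
      exact ⟨hi, hj, Or.inr (Or.inr ⟨rfl, h⟩)⟩
  · rintro ⟨-, -, h | ⟨rfl, h⟩ | ⟨rfl, h⟩⟩
    · exact ⟨hi', hj', Or.inl h⟩
    · rw [← List.getElem?_append_left (l₂ := V') (by omega)] at h
      exact ⟨hi', hj', Or.inr (Or.inl ⟨rfl, h⟩)⟩
    · rw [← List.getElem?_append_left (l₂ := V') (by omega)] at h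
      exact ⟨hi', hj', Or.inr (Or.inr ⟨rfl, h⟩)⟩

lemma pathArc_append_right_iff {V V' : List Symb} {i j : ℕ} :
    pathArc (V ++ V') (V.length + i) (V.length + j) ↔ pathArc V' i j := by
  simp only [pathArc, List.length_append, List.getElem?_append_right (Nat.le_add_right _ _),
    Nat.add_sub_cancel_left, add_le_add_iff_left, add_assoc, add_right_inj]

theorem wle_append {U U' V V' : List Symb} (h : wle U V) (h' : wle U' V') :
    wle (U ++ U') (V ++ V') := by
  obtain ⟨f, hf0, hfend, hfarc, hfsurj⟩ := h
  obtain ⟨f', hf0', hfend', hfarc', hfsurj'⟩ := h'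
  let g : ℕ → ℕ := fun i => if i ≤ V.length then f i else U.length + f' (i - V.length)
  have hg_left : ∀ i ≤ V.length, g i = f i := fun i hi => if_pos hi
  have hg_right : ∀ i, g (V.length + i) = U.length + f' i := by
    rintro (_ | i)
    · simp [g, hfend, hf0']
    · simp [g]
  refine ⟨g, hg_left 0 (Nat.zero_le _) ▸ hf0, ?_, ?_, ?_⟩
  · simp only [List.length_append, hg_right, hfend']
  · intro i j hij
    obtain ⟨hij₁, hij₂⟩ := pathArc_le_succ hij
    by_cases hV : i ≤ V.length ∧ j ≤ V.length
    · have hU := hfarc i j ((pathArc_append_left_iff hV.1 hV.2).1 hij)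
      rw [hg_left i hV.1, hg_left j hV.2]
      exact (pathArc_append_left_iff hU.1 hU.2.1).2 hU
    · obtain ⟨i, rfl⟩ : ∃ k, i = V.length + k := ⟨i - V.length, by omega⟩
      obtain ⟨j, rfl⟩ : ∃ k, j = V.length + k := ⟨j - V.length, by omega⟩
      rw [hg_right, hg_right, pathArc_append_right_iff]
      exact hfarc' i j (pathArc_append_right_iff.1 hij)
  · intro m hm
    rw [List.length_append] at hm
    by_cases hmU : m ≤ U.length
    · obtain ⟨i, hi, rfl⟩ := hfsurj m hmU
      exact ⟨i, by rw [List.length_append]; omega, hg_left i hi⟩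
    · obtain ⟨i, hi, hfi⟩ := hfsurj' (m - U.length) (by omega)
      exact ⟨V.length + i, by rw [List.length_append]; omega, by rw [hg_right, hfi]; omega⟩

theorem wle_refl (V : List Symb) : wle V V :=
  ⟨id, rfl, rfl, fun _ _ h => h, fun m hm => ⟨m, hm, rfl⟩⟩

theorem wle_nil_left (V : List Symb) : wle [] V :=
  ⟨fun _ => 0, rfl, rfl, fun _ _ _ => ⟨le_rfl, le_rfl, Or.inl rfl⟩,
    fun _ hm => ⟨0, Nat.zero_le _, (Nat.le_zero.1 hm).symm⟩⟩

theorem wle_singleton_minus {x : Symb} (hx : x ≠ Symb.plus) : wle [x] [Symb.minus] := by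
  refine ⟨id, rfl, rfl, ?_, fun m hm => ⟨m, hm, rfl⟩⟩
  rintro i j ⟨hi, hj, h | ⟨rfl, h⟩ | ⟨rfl, h⟩⟩
  · exact ⟨hi, hj, Or.inl h⟩
  · obtain rfl : i = 0 := by simp only [List.length_singleton] at hj; omega
    simp at h
  · obtain rfl : j = 0 := by simp only [List.length_singleton] at hi; omega
    refine ⟨hi, hj, Or.inr (Or.inr ⟨rfl, ?_⟩)⟩
    cases x <;> simp_all

theorem wle_singleton_minus_plus (x : Symb) : wle [x] [Symb.minus, Symb.plus] := by
  by_cases hx : x = Symb.plus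
  · subst hx
    exact wle_append (U := []) (V := [Symb.minus]) (wle_nil_left _) (wle_refl _)
  · exact wle_append (U' := []) (V' := [Symb.plus]) (wle_singleton_minus hx) (wle_nil_left _)

theorem wle_pair_minus_plus {x : Symb} (hx : x ≠ Symb.plus) :
    wle [x, Symb.plus] [Symb.minus, Symb.plus] :=
  wle_append (U := [x]) (V := [Symb.minus]) (wle_singleton_minus hx) (wle_refl _)

theorem stmt_13_general (s : ℕ) (W : List Symb)
    (hlen : W.length ≤ s + 1) (hW : W ≠ List.replicate (s + 1) Symb.plus) :
    wle W ((List.replicate s [Symb.minus, Symb.plus]).flatten ++ [Symb.minus]) := by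
  induction s generalizing W with
  | zero =>
    match W, hlen, hW with
    | [], _, _ => exact wle_nil_left _
    | [x], _, hx => exact wle_singleton_minus (by simpa using hx)
  | succ s ih =>
    rw [List.replicate_succ, List.flatten_cons, List.append_assoc]
    match W, hlen, hW with
    | [], _, _ => exact wle_nil_left _
    | x :: W', hlen, hW =>
      by_cases hW' : W' = List.replicate (s + 1) Symb.plus
      · subst hW'
        have hx : x ≠ Symb.plus := fun hx => hW (by subst hx; rfl)
        have hsplit : x :: List.replicate (s + 1) Symb.plus =
            [x, Symb.plus] ++ List.replicate s Symb.plus := rfl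
        have hshort : List.replicate s Symb.plus ≠ List.replicate (s + 1) Symb.plus :=
          fun h => by simpa using congrArg List.length h
        rw [hsplit]
        exact wle_append (wle_pair_minus_plus hx) (ih _ (by simp) hshort)
      · exact wle_append (wle_singleton_minus_plus x) (ih W' (by simpa using hlen) hW')

/-- `(-+)^s- ≥ W` for every word `W` of length at most `s+1` except `(+)^{s+1}`. -/
theorem stmt_13 (s : ℕ) (hs : 1 ≤ s) (W : List Symb)
    (hlen : W.length ≤ s + 1) (hW : W ≠ List.replicate (s + 1) Symb.plus) :
    wle W ((List.replicate s [Symb.minus, Symb.plus]).flatten ++ [Symb.minus]) :=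
  stmt_13_general s W hlen hW
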